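/- Let G be a simple connected graph on n vertices with m edges, let v_i be a vertex of degree d_i, and set n' = max{2m/n, n − 2m/n}. Then LE_G(v_i) ≥ ( (2m/n − d_i)² + d_i ) / n'. -/

import Mathlib

open Matrix BigOperators Finset

/-- The positive semidefinite square root of a positive semidefinite matrix (the definition
of Mathlib's former `Matrix.PosSemidef.sqrt`, removed since). -/
noncomputable def Matrix.PosSemidef.sqrt {m : Type*} [Fintype m] [DecidableEq m]
    {A : Matrix m m ℝ} (hA : A.PosSemidef) : Matrix m m ℝ :=
  hA.1.eigenvectorUnitary.1 * diagonal ((↑) ∘ (√·) ∘ hA.1.eigenvalues) *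
    (star hA.1.eigenvectorUnitary : Matrix m m ℝ)

/-- The absolute value of a real matrix `B`, defined as `(B * Bᵀ)^(1/2)`. -/
noncomputable def matAbs {n : ℕ} (B : Matrix (Fin n) (Fin n) ℝ) : Matrix (Fin n) (Fin n) ℝ :=
  (Matrix.conjTranspose_eq_transpose_of_trivial B ▸
    Matrix.posSemidef_self_mul_conjTranspose B : (B * Bᵀ).PosSemidef).sqrt

/-- The (adjacency) energy of the vertex `i` of the graph `G`: `|A|_{ii}`. -/
noncomputable def vertexEnergy {n : ℕ} (G : SimpleGraph (Fin n)) [DecidableRel G.Adj]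
    (i : Fin n) : ℝ :=
  matAbs (G.adjMatrix ℝ) i i

/-- The Laplacian energy of the vertex `i` of the graph `G`: `(|L - (2m/n) I|)_{ii}`. -/
noncomputable def vertexLapEnergy {n : ℕ} (G : SimpleGraph (Fin n)) [DecidableRel G.Adj]
    (i : Fin n) : ℝ :=
  matAbs (G.lapMatrix ℝ - ((2 * (G.edgeFinset.card : ℝ)) / n) • 1) i i

/-- The normalized Laplacian `𝓛 = I - D^{-1/2} A D^{-1/2}` of the graph `G`. -/
noncomputable def normLap {n : ℕ} (G : SimpleGraph (Fin n)) [DecidableRel G.Adj] :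
    Matrix (Fin n) (Fin n) ℝ :=
  1 - Matrix.diagonal (fun i => (Real.sqrt (G.degree i))⁻¹) * G.adjMatrix ℝ *
      Matrix.diagonal (fun i => (Real.sqrt (G.degree i))⁻¹)

/-- The normalized Laplacian energy of the vertex `i` of the graph `G`: `(|𝓛 - I|)_{ii}`. -/
noncomputable def vertexNormLapEnergy {n : ℕ} (G : SimpleGraph (Fin n)) [DecidableRel G.Adj]
    (i : Fin n) : ℝ :=
  matAbs (normLap G - 1) i i

/-! With `M = L - (2m/n) I` we have `|M|² = M²`, and `0 ≤ L ≤ n I` puts the spectrum of `M` in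
`[-n', n']`. Since `t² ≤ n' |t|` there, the functional calculus gives `M² ≤ n' |M|` in the Loewner
order; comparing the `i`-th diagonal entries, where `(M²)ᵢᵢ = (2m/n - dᵢ)² + dᵢ`, gives the bound. -/

open scoped MatrixOrder

lemma Matrix.PosSemidef.sqrt_eq_cfcSqrt {m : Type*} [Fintype m] [DecidableEq m]
    {A : Matrix m m ℝ} (hA : A.PosSemidef) : hA.sqrt = CFC.sqrt A := by
  rw [CFC.sqrt_eq_cfc, cfc_nnreal_eq_real _ A hA.nonneg, hA.1.cfc_eq]
  simp only [IsHermitian.cfc, Unitary.conjStarAlgAut_apply, Matrix.PosSemidef.sqrt]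
  congr 2
  ext i j
  simp [diagonal_apply, hA.eigenvalues_nonneg]

lemma matAbs_eq_cfcAbs {n : ℕ} {B : Matrix (Fin n) (Fin n) ℝ} (hB : IsSelfAdjoint B) :
    matAbs B = CFC.abs B := by
  rw [matAbs, Matrix.PosSemidef.sqrt_eq_cfcSqrt, CFC.abs, hB.star_eq,
    ← conjTranspose_eq_transpose_of_trivial, ← star_eq_conjTranspose, hB.star_eq]

lemma CFC.mul_self_le_smul_abs {A : Type*} [Ring A] [StarRing A] [TopologicalSpace A]
    [Algebra ℝ A] [ContinuousFunctionalCalculus ℝ A IsSelfAdjoint] [PartialOrder A]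
    [StarOrderedRing A] [NonnegSpectrumClass ℝ A] [IsTopologicalRing A] [T2Space A]
    {a : A} (ha : IsSelfAdjoint a) {r : ℝ} (hr : ∀ x ∈ spectrum ℝ a, |x| ≤ r) :
    a * a ≤ r • CFC.abs a := by
  have hsq : a * a = cfc (fun x : ℝ => x * x) a := by
    rw [cfc_mul .., cfc_id' ℝ a]
  rw [CFC.abs_eq_cfc_norm a ha, ← cfc_smul .., hsq]
  refine cfc_mono fun x hx => ?_
  rw [smul_eq_mul, Real.norm_eq_abs, ← sq, ← sq_abs, sq]
  exact mul_le_mul_of_nonneg_right (hr x hx) (by positivity)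

lemma sum_sum_sub_sq {V : Type*} [Fintype V] (x : V → ℝ) :
    ∑ i, ∑ j, (x i - x j) ^ 2 = 2 * Fintype.card V * ∑ i, x i ^ 2 - 2 * (∑ i, x i) ^ 2 := by
  simp only [sub_sq, Finset.sum_add_distrib, Finset.sum_sub_distrib, Finset.sum_const,
    Finset.card_univ, nsmul_eq_mul, ← Finset.mul_sum, ← Finset.sum_mul]
  ring

namespace SimpleGraph

variable {V : Type*} [Fintype V] [DecidableEq V] (G : SimpleGraph V) [DecidableRel G.Adj]

lemma dotProduct_lapMatrix_mulVec_le (x : V → ℝ) :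
    x ⬝ᵥ (G.lapMatrix ℝ *ᵥ x) ≤ Fintype.card V * (x ⬝ᵥ x) := by
  rw [← toLinearMap₂'_apply', lapMatrix_toLinearMap₂']
  have hle : (∑ i, ∑ j, if G.Adj i j then (x i - x j) ^ 2 else 0) ≤ ∑ i, ∑ j, (x i - x j) ^ 2 :=
    Finset.sum_le_sum fun i _ => Finset.sum_le_sum fun j _ => by
      split_ifs
      · exact le_rfl
      · positivity
  have hx : x ⬝ᵥ x = ∑ i, x i ^ 2 := by simp only [dotProduct, sq]
  nlinarith [sum_sum_sub_sq x, sq_nonneg (∑ i, x i)]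

lemma lapMatrix_le_card_smul_one : G.lapMatrix ℝ ≤ (Fintype.card V : ℝ) • (1 : Matrix V V ℝ) := by
  refine Matrix.le_iff.mpr (.of_dotProduct_mulVec_nonneg ?_ fun x => ?_)
  · exact (isHermitian_one.smul (.all _)).sub (G.isHermitian_lapMatrix ℝ)
  · simp only [star_trivial, sub_mulVec, smul_mulVec, one_mulVec, dotProduct_sub,
      dotProduct_smul, smul_eq_mul, sub_nonneg]
    exact G.dotProduct_lapMatrix_mulVec_le x

lemma isSelfAdjoint_lapMatrix_sub_smul_one (c : ℝ) : IsSelfAdjoint (G.lapMatrix ℝ - c • 1) :=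
  (G.isHermitian_lapMatrix ℝ).sub (isHermitian_one.smul (.all c))

lemma spectrum_lapMatrix_sub_smul_one_subset_Icc (c : ℝ) :
    spectrum ℝ (G.lapMatrix ℝ - c • 1) ⊆ Set.Icc (-c) (Fintype.card V - c) := by
  have hsa := G.isSelfAdjoint_lapMatrix_sub_smul_one c
  have hlow : algebraMap ℝ (Matrix V V ℝ) (-c) ≤ G.lapMatrix ℝ - c • 1 := by
    simpa [Algebra.algebraMap_eq_smul_one, neg_smul, ← sub_eq_add_neg] using
      sub_le_sub_right (posSemidef_lapMatrix ℝ G).nonneg (c • 1)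
  have hup : G.lapMatrix ℝ - c • 1 ≤ algebraMap ℝ (Matrix V V ℝ) (Fintype.card V - c) := by
    simpa [Algebra.algebraMap_eq_smul_one, sub_smul] using
      sub_le_sub_right G.lapMatrix_le_card_smul_one (c • 1)
  exact fun x hx => ⟨(algebraMap_le_iff_le_spectrum hsa).mp hlow x hx,
    (le_algebraMap_iff_spectrum_le hsa).mp hup x hx⟩

lemma lapMatrix_sub_smul_one_mul_self_apply_self (c : ℝ) (i : V) :
    ((G.lapMatrix ℝ - c • 1) * (G.lapMatrix ℝ - c • 1)) i i =
      (c - G.degree i) ^ 2 + G.degree i := by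
  have hM : G.lapMatrix ℝ - c • 1 = diagonal (fun j => (G.degree j : ℝ) - c) - G.adjMatrix ℝ := by
    ext j k
    by_cases h : j = k <;> simp [lapMatrix, degMatrix, one_apply, h]
  rw [hM, sub_mul, mul_sub, mul_sub, diagonal_mul_diagonal]
  simp only [Matrix.sub_apply, diagonal_apply_eq, diagonal_mul, mul_diagonal, adjMatrix_apply,
    G.loopless.irrefl, if_false, mul_zero, zero_mul, adjMatrix_mul_self_apply_self]
  ring

end SimpleGraph

theorem stmt7_general {n : ℕ} (G : SimpleGraph (Fin n)) [DecidableRel G.Adj]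
    (i : Fin n) :
    vertexLapEnergy G i ≥
      ((2 * (G.edgeFinset.card : ℝ) / n - (G.degree i : ℝ)) ^ 2 + (G.degree i : ℝ)) /
        max (2 * (G.edgeFinset.card : ℝ) / n) ((n : ℝ) - 2 * (G.edgeFinset.card : ℝ) / n) := by
  set c := 2 * (G.edgeFinset.card : ℝ) / n
  set M := G.lapMatrix ℝ - c • 1
  have hn : (0 : ℝ) < n := by exact_mod_cast i.pos
  have hpos : 0 < max c (n - c) := by
    linarith [le_max_left c (n - c), le_max_right c (n - c)]
  have hM : IsSelfAdjoint M := G.isSelfAdjoint_lapMatrix_sub_smul_one c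
  have hspec : ∀ x ∈ spectrum ℝ M, |x| ≤ max c (n - c) := fun x hx => by
    obtain ⟨hlow, hup⟩ := G.spectrum_lapMatrix_sub_smul_one_subset_Icc c hx
    rw [Fintype.card_fin] at hup
    exact abs_le.mpr ⟨by linarith [le_max_left c (n - c)], hup.trans (le_max_right _ _)⟩
  have hdiag : (M * M) i i ≤ max c (n - c) * CFC.abs M i i := by
    simpa [sub_nonneg] using
      (Matrix.le_iff.mp (CFC.mul_self_le_smul_abs hM hspec)).diag_nonneg (i := i)
  rw [ge_iff_le, div_le_iff₀ hpos, ← G.lapMatrix_sub_smul_one_mul_self_apply_self, vertexLapEnergy,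
    matAbs_eq_cfcAbs hM, mul_comm]
  exact hdiag

theorem stmt7 {n : ℕ} (G : SimpleGraph (Fin n)) [DecidableRel G.Adj]
    (hconn : G.Connected) (i : Fin n) :
    vertexLapEnergy G i ≥
      ((2 * (G.edgeFinset.card : ℝ) / n - (G.degree i : ℝ)) ^ 2 + (G.degree i : ℝ)) /
        max (2 * (G.edgeFinset.card : ℝ) / n) ((n : ℝ) - 2 * (G.edgeFinset.card : ℝ) / n) :=
  stmt7_general G i
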